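/- Let S be a set and n : S × S → ℤ a function satisfying: (i) n(x,y) = -n(y,x) for all x,y; (ii) n(x,y) ≠ 0 for all distinct x,y; (iii) for any three distinct x,y,z, n(x,z) ∈ {n(x,y)+n(y,z)-1, n(x,y)+n(y,z)+1}. Then the relation defined by x < y iff n(x,y) < 0 is a strict total (linear) order on S. -/

import Mathlib

theorem stmt_3 {S : Type*} (n : S × S → ℤ)
    (hanti : ∀ x y : S, n (x, y) = -n (y, x))
    (hne : ∀ x y : S, x ≠ y → n (x, y) ≠ 0)
    (hquasi : ∀ x y z : S, x ≠ y → y ≠ z → x ≠ z →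
      n (x, z) = n (x, y) + n (y, z) - 1 ∨ n (x, z) = n (x, y) + n (y, z) + 1) :
    IsStrictTotalOrder S (fun x y => n (x, y) < 0) := by
  have hself : ∀ x : S, n (x, x) = 0 := by
    intro x; have := hanti x x; omega
  have hnz : ∀ x y : S, n (x, y) < 0 → x ≠ y := by
    intro x y h heq; subst heq; rw [hself] at h; omega
  have tri : IsTrichotomous S (fun x y => n (x, y) < 0) := by
    constructor
    intro x y
    rcases eq_or_ne x y with rfl | hxy
    · intro _ _; rfl
    · rcases lt_or_gt_of_ne (hne x y hxy) with h | h
      · intro h'; exact absurd h h'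
      · intro _ h'; exfalso; have := hanti x y; omega
  have irr : IsIrrefl S (fun x y => n (x, y) < 0) := by
    constructor
    intro x h; rw [hself] at h; omega
  have tr : IsTrans S (fun x y => n (x, y) < 0) := by
    constructor
    intro x y z hxy hyz
    have h1 := hnz x y hxy
    have h2 := hnz y z hyz
    have hxz : x ≠ z := by
      rintro rfl; have := hanti x y; omega
    rcases hquasi x y z h1 h2 hxz with h | h <;> omega
  exact { }
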